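/- Let A_1, …, A_k be pairwise commuting N×N matrices with nonnegative integer entries forming an irreducible family, with every row sum of every A_i at least 2, let x be the unimodular Perron–Frobenius eigenvector, and fix δ ∈ (0,1). Then the Hausdorff dimension of the metric space (X_B, d_δ) equals δ. -/

import Mathlib

open scoped Classical ENNReal Topology
open TopologicalSpace MeasureTheory Filter Set

namespace KBratteli

open Fin.NatCast

variable (k N : ℕ) [NeZero k] (A : Fin k → Matrix (Fin N) (Fin N) ℕ)

/-- An edge at level `n` of the stationary `k`-Bratteli diagram of the matrices
`A 0, …, A (k-1)`: an element of `Edge k N A n` is an edge whose source lies in the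
level-`(n+1)` vertex set and whose range lies in the level-`n` vertex set (both copies of
`Fin N`); there are exactly `A (n % k) p q` edges with range `p` and source `q`. -/
structure Edge (n : ℕ) : Type where
  rg : Fin N
  src : Fin N
  idx : Fin (A (n : Fin k) rg src)

/-- The infinite path space `X_B` of the stationary `k`-Bratteli diagram of `A`. -/
def PathSpace : Type :=
  { x : (n : ℕ) → Edge k N A n // ∀ n, (x n).src = (x (n + 1)).rg }

/-- A finite path of length `ℓ` beginning at level `0`: a composable string of edges,
together with the vertices it visits.  Length-`0` paths are vertices of `V₀`. -/
structure FinPath (ℓ : ℕ) : Type where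
  vtx : Fin (ℓ + 1) → Fin N
  edge : (i : Fin ℓ) → Edge k N A i
  rg_eq : ∀ i : Fin ℓ, (edge i).rg = vtx i.castSucc
  src_eq : ∀ i : Fin ℓ, (edge i).src = vtx i.succ

/-- `FB`: the set of all finite paths (of all lengths) beginning at level `0`. -/
abbrev FB : Type := Σ ℓ : ℕ, FinPath k N A ℓ

variable {k N A}

/-- The source (final) vertex of a finite path. -/
def FinPath.src {ℓ : ℕ} (lam : FinPath k N A ℓ) : Fin N := lam.vtx (Fin.last ℓ)

/-- The range (initial, level-0) vertex of a finite path. -/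
def FinPath.rg {ℓ : ℕ} (lam : FinPath k N A ℓ) : Fin N := lam.vtx 0

/-- The length-0 finite path at the level-0 vertex `v`. -/
def vertexPath (v : Fin N) : FinPath k N A 0 where
  vtx := fun _ => v
  edge := fun i => i.elim0
  rg_eq := fun i => i.elim0
  src_eq := fun i => i.elim0

/-- The cylinder set `[λ]` of a finite path `λ`: all infinite paths with initial
segment `λ`. -/
def Cyl {ℓ : ℕ} (lam : FinPath k N A ℓ) : Set (PathSpace k N A) :=
  { x | (x.1 0).rg = lam.rg ∧ ∀ i : Fin ℓ, x.1 i = lam.edge i }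

variable (k N A) in
/-- The collection of all cylinder sets. -/
def cylinderSets : Set (Set (PathSpace k N A)) :=
  { S | ∃ (ℓ : ℕ) (lam : FinPath k N A ℓ), S = Cyl lam }

/-- The cylinder-set topology on the infinite path space. -/
instance : TopologicalSpace (PathSpace k N A) :=
  generateFrom (cylinderSets k N A)

/-- The Borel σ-algebra of the cylinder-set topology. -/
instance : MeasurableSpace (PathSpace k N A) := borel _

instance : BorelSpace (PathSpace k N A) := ⟨rfl⟩

lemma isOpen_cyl {ℓ : ℕ} (lam : FinPath k N A ℓ) : IsOpen (Cyl lam) :=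
  isOpen_generateFrom_of_mem ⟨ℓ, lam, rfl⟩

lemma measurableSet_cyl {ℓ : ℕ} (lam : FinPath k N A ℓ) : MeasurableSet (Cyl lam) :=
  (isOpen_cyl lam).measurableSet

/-- Edges form a finite type. -/
def edgeEquiv (n : ℕ) : Edge k N A n ≃ Σ p : Fin N, Σ q : Fin N, Fin (A (n : Fin k) p q) where
  toFun e := ⟨e.rg, e.src, e.idx⟩
  invFun t := ⟨t.1, t.2.1, t.2.2⟩
  left_inv e := rfl
  right_inv t := rfl

instance (n : ℕ) : Finite (Edge k N A n) := by
  haveI : ∀ p, Finite (Σ q : Fin N, Fin (A (n : Fin k) p q)) := fun p => Finite.instSigma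
  exact @Finite.of_equiv _ _ Finite.instSigma (edgeEquiv n).symm

instance (ℓ : ℕ) : Finite (FinPath k N A ℓ) := by
  have hinj : Function.Injective
      (fun lam : FinPath k N A ℓ => (lam.vtx, lam.edge)) := by
    rintro ⟨v, e, h1, h2⟩ ⟨v', e', h1', h2'⟩ h
    simp only [Prod.mk.injEq] at h
    obtain ⟨hv, he⟩ := h
    subst hv; subst he; rfl
  exact Finite.of_injective _ hinj

instance : Countable (FB k N A) := by infer_instance

/-- The initial segment of length `m` of an infinite path. -/
def prefixPath (x : PathSpace k N A) (m : ℕ) : FinPath k N A m where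
  vtx := fun i => (x.1 i).rg
  edge := fun i => x.1 i
  rg_eq := fun _ => rfl
  src_eq := fun i => x.2 i

lemma mem_cyl_prefixPath (x : PathSpace k N A) (m : ℕ) : x ∈ Cyl (prefixPath x m) :=
  ⟨rfl, fun _ => rfl⟩

lemma measurableSet_coord (j : ℕ) (P : Edge k N A j → Prop) :
    MeasurableSet { x : PathSpace k N A | P (x.1 j) } := by
  have h : { x : PathSpace k N A | P (x.1 j) }
      = ⋃ (lam : FinPath k N A (j + 1)) (_ : P (lam.edge (Fin.last j))), Cyl lam := by
    ext x
    simp only [Set.mem_setOf_eq, Set.mem_iUnion]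
    constructor
    · intro hx
      exact ⟨prefixPath x (j + 1), hx, mem_cyl_prefixPath x (j + 1)⟩
    · rintro ⟨lam, hP, -, hedge⟩
      have hx : x.1 j = lam.edge (Fin.last j) := hedge (Fin.last j)
      rw [hx]; exact hP
  rw [h]
  exact MeasurableSet.iUnion fun lam => MeasurableSet.iUnion fun _ => measurableSet_cyl lam

/-- The first level at which two infinite paths differ. -/
noncomputable def firstDiff (x y : PathSpace k N A) : ℕ := sInf { n | x.1 n ≠ y.1 n }

/-- The function `d_w` associated to a weight-type function `w` on finite paths:
`d_w(x,x) = 0`; `d_w(x,y) = 1` if `x` and `y` have no common initial sub-path (i.e. they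
do not even start at the same level-0 vertex); and otherwise `d_w(x,y) = w(x ∧ y)`, the
value of `w` on the longest common initial sub-path of `x` and `y`. -/
noncomputable def distW (w : FB k N A → ℝ) (x y : PathSpace k N A) : ℝ :=
  if x = y then 0
  else if (x.1 0).rg = (y.1 0).rg then w ⟨firstDiff x y, prefixPath x (firstDiff x y)⟩
  else 1

/-- `η` is an (initial) sub-path of `λ`. -/
def IsSubPath {m ℓ : ℕ} (η : FinPath k N A m) (lam : FinPath k N A ℓ) : Prop :=
  ∃ h : m ≤ ℓ, η.rg = lam.rg ∧ ∀ i : Fin m, η.edge i = lam.edge (Fin.castLE h i)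

/-- `lam ∈ F_γ B` : the finite path `lam` extends `γ`. -/
def Extends {m : ℕ} (γ : FinPath k N A m) (lam : FB k N A) : Prop :=
  IsSubPath γ lam.2

/-- The spectral radius of a matrix of nonnegative integers, as a real number. -/
noncomputable def specRad {N : ℕ} (M : Matrix (Fin N) (Fin N) ℕ) : ℝ :=
  (spectralRadius ℂ (M.map (Nat.cast : ℕ → ℂ))).toReal

/-- The weight `w_δ` on the stationary `k`-Bratteli diagram of `A`, relative to data
`ρ : Fin k → ℝ` (the spectral radii) and `xv : Fin N → ℝ` (the Perron–Frobenius
eigenvector): on a path `η` of length `q·k + t` (`0 ≤ t ≤ k-1`) it is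
`(ρ₁^{q+1} ⋯ ρ_t^{q+1} · ρ_{t+1}^q ⋯ ρ_k^q)^{-1/δ} · xv (s η)`. -/
noncomputable def wt (δ : ℝ) (ρ : Fin k → ℝ) (xv : Fin N → ℝ) (lam : FB k N A) : ℝ :=
  (∏ i : Fin k, ρ i ^ (if (i : ℕ) < lam.1 % k then lam.1 / k + 1 else lam.1 / k))
      ^ (-(1 / δ)) * xv lam.2.src

/-- The value `M([λ]) = (ρ₁⋯ρ_t)^{-(q+1)} (ρ_{t+1}⋯ρ_k)^{-q} · x_{s(λ)}` of the
measure `M` on the cylinder set of a path of length `q·k + t`. -/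
noncomputable def Mval (ρ : Fin k → ℝ) (xv : Fin N → ℝ) (lam : FB k N A) : ℝ :=
  (∏ i : Fin k, ρ i ^ (if (i : ℕ) < lam.1 % k then lam.1 / k + 1 else lam.1 / k))⁻¹
    * xv lam.2.src

/-- A family of matrices is irreducible if for every pair of indices some finite product
of matrices from the family has positive corresponding entry. -/
def IrreducibleFamily {k N : ℕ} (A : Fin k → Matrix (Fin N) (Fin N) ℕ) : Prop :=
  ∀ a b : Fin N, ∃ l : List (Fin k), 0 < (l.map A).prod a b

/-- A single square matrix with nonnegative integer entries is irreducible if for every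
pair of indices some positive power has positive corresponding entry. -/
def MatIrreducible {N : ℕ} (B : Matrix (Fin N) (Fin N) ℕ) : Prop :=
  ∀ a b : Fin N, ∃ m : ℕ, 0 < m ∧ 0 < (B ^ m) a b

/-- The diameter (in `ℝ≥0∞`) of a set of infinite paths relative to `d_w`. -/
noncomputable def diamW (w : FB k N A → ℝ) (U : Set (PathSpace k N A)) : ℝ≥0∞ :=
  ⨆ (x) (_ : x ∈ U) (y) (_ : y ∈ U), ENNReal.ofReal (distW w x y)

/-- The `t`-dimensional Hausdorff (outer) measure of a set `Z` relative to the metric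
`d_w`: `H^t(Z) = lim_{ε → 0} inf { Σᵢ (diam Uᵢ)^t : Z ⊆ ⋃ᵢ Uᵢ, diam Uᵢ < ε }`. -/
noncomputable def hausW (w : FB k N A → ℝ) (t : ℝ) (Z : Set (PathSpace k N A)) : ℝ≥0∞ :=
  ⨆ (ε : ℝ≥0∞) (_ : 0 < ε),
    ⨅ (U : ℕ → Set (PathSpace k N A)) (_ : Z ⊆ ⋃ n, U n)
      (_ : ∀ n, diamW w (U n) < ε), ∑' n, diamW w (U n) ^ t

lemma natCast_mul_add (n i : ℕ) : ((n * k + i : ℕ) : Fin k) = (i : Fin k) := by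
  push_cast
  simp [Fin.natCast_self]

/-- Transport of edges between levels governed by the same matrix (the diagram is
stationary with period `k`). -/
def Edge.cast {i j : ℕ} (h : (i : Fin k) = (j : Fin k)) (e : Edge k N A i) :
    Edge k N A j where
  rg := e.rg
  src := e.src
  idx := Fin.cast (by rw [h]) e.idx

/-- The cylinder set `[γ e]` of a finite path `γ` (of length `m`) extended by one
further edge `e` at level `m`. -/
def cylExt {m : ℕ} (γ : FinPath k N A m) (e : Edge k N A m) : Set (PathSpace k N A) :=
  Cyl γ ∩ { x | x.1 m = e }

lemma measurableSet_cylExt {m : ℕ} (γ : FinPath k N A m) (e : Edge k N A m) :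
    MeasurableSet (cylExt γ e) :=
  (measurableSet_cyl γ).inter (measurableSet_coord m fun f => f = e)

/-- The cylinder set `[λ μ]` of the concatenation of `λ ∈ F^{nk}B` with `μ ∈ F^{k}B`
(the diagram being stationary of period `k`, `μ` concatenates onto `λ`). -/
def cylCat {n : ℕ} (lam : FinPath k N A (n * k)) (η : FinPath k N A k) :
    Set (PathSpace k N A) :=
  Cyl lam ∩ { x | (x.1 (n * k)).rg = η.rg } ∩
    ⋂ i : Fin k,
      { x | x.1 (n * k + (i : ℕ)) = Edge.cast (natCast_mul_add n (i : ℕ)).symm (η.edge i) }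

lemma measurableSet_cylCat {n : ℕ} (lam : FinPath k N A (n * k)) (η : FinPath k N A k) :
    MeasurableSet (cylCat lam η) :=
  ((measurableSet_cyl lam).inter
      (measurableSet_coord (n * k) (fun e => e.rg = η.rg))).inter
    (MeasurableSet.iInter fun i => measurableSet_coord (n * k + (i : ℕ))
      (fun e => e = Edge.cast (natCast_mul_add n (i : ℕ)).symm (η.edge i)))



end KBratteli

/-!
With `P n = ρ 0 ⋯ ρ (n - 1)` (indices mod `k`), the Perron–Frobenius data give the cylinder of a
path `λ` of length `n` the mass `Mval λ = x (s λ) / P n`. The eigenvector equation makes this mass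
additive under extension of paths by one edge, with total mass `1`, and the row-sum condition gives
`ρ i ≥ 2`, so `P n ≥ 2 ^ n`.

If `δ < t`, the level-`n` cylinders cover `X_B`; each has diameter at most `P n ^ (-1/δ)` and there
are at most `P n / min x` of them, so their `t`-sum is `O (P n ^ (1 - t/δ)) → 0`.

If `t < δ`, a set of diameter `d < 1` with two points lies in the cylinder of the longest common
prefix of its points, whose mass is at most `d ^ δ`, and a singleton lies in cylinders of
arbitrarily small mass. By compactness finitely many of these cylinders cover `X_B`, so their
masses add up to at least `1`; hence a cover by sets of diameter `< ε` has
`∑ dᵢ ^ t ≥ ε ^ (t - δ) ∑ dᵢ ^ δ ≥ ε ^ (t - δ)`, which tends to `∞` as `ε → 0`.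
-/

lemma Matrix.le_of_le_row_sum_of_mulVec_eq_smul {n : Type*} [Fintype n] [Nonempty n]
    {M : Matrix n n ℝ} (hM : ∀ a b, 0 ≤ M a b) {c r : ℝ} (hrow : ∀ a, c ≤ ∑ b, M a b)
    {x : n → ℝ} (hx : ∀ v, 0 < x v) (heig : M.mulVec x = r • x) : c ≤ r := by
  obtain ⟨v, -, hv⟩ := Finset.exists_min_image Finset.univ x Finset.univ_nonempty
  refine le_of_mul_le_mul_right ?_ (hx v)
  calc c * x v ≤ (∑ b, M v b) * x v := mul_le_mul_of_nonneg_right (hrow v) (hx v).le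
    _ = ∑ b, M v b * x v := Finset.sum_mul _ _ _
    _ ≤ ∑ b, M v b * x b :=
        Finset.sum_le_sum fun b _ => mul_le_mul_of_nonneg_left (hv b (Finset.mem_univ b)) (hM v b)
    _ = r * x v := by simpa [Matrix.mulVec, dotProduct] using congrFun heig v

lemma ENNReal.rpow_le_rpow_mul_rpow_sub {d ε : ℝ≥0∞} {t δ : ℝ} (hdε : d ≤ ε) (ht : 0 ≤ t)
    (htδ : t ≤ δ) : d ^ δ ≤ d ^ t * ε ^ (δ - t) := by
  calc d ^ δ = d ^ t * d ^ (δ - t) := by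
        rw [← ENNReal.rpow_add_of_nonneg _ _ ht (sub_nonneg.mpr htδ), add_sub_cancel]
    _ ≤ d ^ t * ε ^ (δ - t) := by gcongr

namespace KBratteli

open Fin.NatCast

section Development

variable {k N : ℕ} [NeZero k] {A : Fin k → Matrix (Fin N) (Fin N) ℕ}

noncomputable instance (n : ℕ) : Fintype (Edge k N A n) := Fintype.ofFinite _

noncomputable instance (ℓ : ℕ) : Fintype (FinPath k N A ℓ) := Fintype.ofFinite _

section FinitePaths

lemma FinPath.ext_rg_edge {ℓ : ℕ} {p q : FinPath k N A ℓ} (h0 : p.rg = q.rg)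
    (he : p.edge = q.edge) : p = q := by
  obtain ⟨pv, pe, prg, psrc⟩ := p
  obtain ⟨qv, qe, qrg, qsrc⟩ := q
  obtain rfl : pe = qe := he
  obtain rfl : pv = qv := by
    funext i
    induction i using Fin.induction with
    | zero => exact h0
    | succ j => rw [← psrc j, ← qsrc j]
  rfl

def FinPath.extend {n : ℕ} (lam : FinPath k N A n) (e : Edge k N A n)
    (he : e.rg = lam.src) : FinPath k N A (n + 1) where
  vtx := Fin.snoc lam.vtx e.src
  edge := Fin.lastCases (motive := fun i : Fin (n + 1) => Edge k N A i) e lam.edge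
  rg_eq i := by
    induction i using Fin.lastCases with
    | last => rw [Fin.lastCases_last, Fin.snoc_castSucc]; exact he
    | cast j => rw [Fin.lastCases_castSucc, Fin.snoc_castSucc]; exact lam.rg_eq j
  src_eq i := by
    induction i using Fin.lastCases with
    | last => simp only [Fin.lastCases_last, Fin.succ_last, Fin.snoc_last]
    | cast j =>
      rw [Fin.lastCases_castSucc, Fin.succ_castSucc, Fin.snoc_castSucc]
      exact lam.src_eq j

def FinPath.init {n : ℕ} (μ : FinPath k N A (n + 1)) : FinPath k N A n where
  vtx i := μ.vtx i.castSucc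
  edge j := μ.edge j.castSucc
  rg_eq j := μ.rg_eq j.castSucc
  src_eq j := Fin.succ_castSucc j ▸ μ.src_eq j.castSucc

section Extend

variable {n : ℕ} (lam : FinPath k N A n) (e : Edge k N A n) (he : e.rg = lam.src)

@[simp] lemma FinPath.extend_src : (lam.extend e he).src = e.src :=
  Fin.snoc_last (α := fun _ => Fin N) _ _

@[simp] lemma FinPath.extend_rg : (lam.extend e he).rg = lam.rg :=
  Fin.snoc_castSucc (α := fun _ => Fin N) (p := lam.vtx) e.src 0

@[simp] lemma FinPath.extend_edge_castSucc (j : Fin n) :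
    (lam.extend e he).edge j.castSucc = lam.edge j := by
  simp only [FinPath.extend, Fin.lastCases_castSucc]

@[simp] lemma FinPath.extend_edge_last : (lam.extend e he).edge (Fin.last n) = e := by
  simp only [FinPath.extend, Fin.lastCases_last]

@[simp] lemma FinPath.init_extend : (lam.extend e he).init = lam :=
  FinPath.ext_rg_edge (FinPath.extend_rg lam e he) (by funext j; simp [FinPath.init])

end Extend

lemma FinPath.init_src {n : ℕ} (μ : FinPath k N A (n + 1)) :
    μ.init.src = (μ.edge (Fin.last n)).rg :=
  (μ.rg_eq (Fin.last n)).symm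

lemma FinPath.extend_init {n : ℕ} (μ : FinPath k N A (n + 1)) :
    μ.init.extend (μ.edge (Fin.last n)) μ.init_src.symm = μ := by
  refine FinPath.ext_rg_edge (FinPath.extend_rg _ _ _) ?_
  funext i
  induction i using Fin.lastCases with
  | last => simp
  | cast j => simp [FinPath.init]

def FinPath.succEquiv (n : ℕ) :
    FinPath k N A (n + 1) ≃ Σ lam : FinPath k N A n, {e : Edge k N A n // e.rg = lam.src} where
  toFun μ := ⟨μ.init, μ.edge (Fin.last n), μ.init_src.symm⟩
  invFun p := p.1.extend p.2.1 p.2.2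
  left_inv := FinPath.extend_init
  right_inv p := Sigma.subtype_ext (FinPath.init_extend _ _ p.2.2)
    (FinPath.extend_edge_last _ _ p.2.2)

lemma sum_finPath_succ {M : Type*} [AddCommMonoid M] {n : ℕ} (f : FinPath k N A (n + 1) → M) :
    ∑ μ, f μ = ∑ lam : FinPath k N A n, ∑ e : {e : Edge k N A n // e.rg = lam.src},
      f (lam.extend e e.2) := by
  refine Eq.trans ?_ (Fintype.sum_sigma fun p : Σ lam : FinPath k N A n,
    {e : Edge k N A n // e.rg = lam.src} => f (p.1.extend p.2.1 p.2.2))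
  exact Fintype.sum_equiv (FinPath.succEquiv n) _ _ fun μ => by
    simp [FinPath.succEquiv, FinPath.extend_init]

end FinitePaths

section RhoProd

variable (ρ : Fin k → ℝ)

def rhoProd (n : ℕ) : ℝ := ∏ j ∈ Finset.range n, ρ j

lemma card_filter_natCast_eq (n : ℕ) (i : Fin k) :
    ((Finset.range n).filter fun j : ℕ => (j : Fin k) = i).card
      = if (i : ℕ) < n % k then n / k + 1 else n / k := by
  have hk : 0 < k := Nat.pos_of_neZero k
  have hfilter : ∀ j : ℕ, (j : Fin k) = i ↔ j ≡ i [MOD k] := fun j => by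
    rw [Fin.ext_iff, Fin.val_natCast, Nat.ModEq, Nat.mod_eq_of_lt i.2]
  rw [Finset.filter_congr fun j _ => hfilter j, ← Nat.count_eq_card_filter_range,
    Nat.count_modEq_card n hk, Nat.mod_eq_of_lt i.2]
  split_ifs <;> rfl

lemma prod_pow_eq_rhoProd (n : ℕ) :
    ∏ i : Fin k, ρ i ^ (if (i : ℕ) < n % k then n / k + 1 else n / k) = rhoProd ρ n := by
  rw [rhoProd, ← Finset.prod_fiberwise' _ (fun j : ℕ => (j : Fin k)) ρ]
  simp_rw [Finset.prod_const, card_filter_natCast_eq]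

lemma wt_eq (δ : ℝ) (x : Fin N → ℝ) {n : ℕ} (lam : FinPath k N A n) :
    wt δ ρ x ⟨n, lam⟩ = rhoProd ρ n ^ (-(1 / δ)) * x lam.src := by
  rw [wt, prod_pow_eq_rhoProd]

lemma Mval_eq (x : Fin N → ℝ) {n : ℕ} (lam : FinPath k N A n) :
    Mval ρ x ⟨n, lam⟩ = (rhoProd ρ n)⁻¹ * x lam.src := by
  rw [Mval, prod_pow_eq_rhoProd]

variable {ρ}

lemma rhoProd_pos (hρ : ∀ i, 0 < ρ i) (n : ℕ) : 0 < rhoProd ρ n :=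
  Finset.prod_pos fun j _ => hρ j

lemma Mval_nonneg (hρ : ∀ i, 0 < ρ i) {x : Fin N → ℝ} (hx : ∀ v, 0 ≤ x v) (lam : FB k N A) :
    0 ≤ Mval ρ x lam := by
  rw [Mval_eq]
  exact mul_nonneg (inv_nonneg.mpr (rhoProd_pos hρ _).le) (hx _)

lemma pow_le_rhoProd {c : ℝ} (hc : 0 ≤ c) (hρ : ∀ i, c ≤ ρ i) (n : ℕ) : c ^ n ≤ rhoProd ρ n := by
  simpa [rhoProd] using Finset.prod_le_prod (s := Finset.range n) (fun _ _ => hc) fun j _ => hρ j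

lemma rhoProd_mono (hρ : ∀ i, 1 ≤ ρ i) : Monotone (rhoProd ρ) := fun m n hmn => by
  rw [rhoProd, rhoProd, ← Finset.prod_range_mul_prod_Ico _ hmn]
  exact le_mul_of_one_le_right (Finset.prod_nonneg fun j _ => zero_le_one.trans (hρ j))
    (Finset.one_le_prod fun j _ => hρ j)

lemma tendsto_rhoProd_atTop (hρ : ∀ i, 2 ≤ ρ i) : Tendsto (rhoProd ρ) atTop atTop :=
  tendsto_atTop_mono (pow_le_rhoProd zero_le_two hρ)
    (tendsto_pow_atTop_atTop_of_one_lt one_lt_two)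

end RhoProd

section SubPaths

lemma IsSubPath.refl {m : ℕ} (γ : FinPath k N A m) : IsSubPath γ γ :=
  ⟨le_rfl, rfl, fun _ => rfl⟩

lemma IsSubPath.eq {m : ℕ} {γ η : FinPath k N A m} (h : IsSubPath γ η) : γ = η :=
  FinPath.ext_rg_edge h.2.1 (funext h.2.2)

lemma isSubPath_vertexPath_iff {ℓ : ℕ} (v : Fin N) (η : FinPath k N A ℓ) :
    IsSubPath (vertexPath v) η ↔ v = η.rg :=
  ⟨fun h => h.2.1, fun h => ⟨ℓ.zero_le, h, fun i => i.elim0⟩⟩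

lemma isSubPath_extend_iff {m L : ℕ} (hmL : m ≤ L) (γ : FinPath k N A m)
    (lam : FinPath k N A L) (e : Edge k N A L) (he : e.rg = lam.src) :
    IsSubPath γ (lam.extend e he) ↔ IsSubPath γ lam := by
  refine ⟨fun ⟨_, hrg, hedge⟩ => ⟨hmL, ?_, fun i => ?_⟩,
    fun ⟨hle, hrg, hedge⟩ => ⟨hle.trans L.le_succ, ?_, fun i => ?_⟩⟩
  · rw [hrg, FinPath.extend_rg]
  · rw [hedge i]; exact FinPath.extend_edge_castSucc lam e he (Fin.castLE hmL i)
  · rw [hrg, FinPath.extend_rg]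
  · rw [hedge i]; exact (FinPath.extend_edge_castSucc lam e he (Fin.castLE hle i)).symm

end SubPaths

section EigenvectorSums

variable {ρ : Fin k → ℝ} {x : Fin N → ℝ}

lemma sum_edge_src (hxeig : ∀ i, ((A i).map (Nat.cast : ℕ → ℝ)).mulVec x = ρ i • x)
    (n : ℕ) (v : Fin N) :
    ∑ e : {e : Edge k N A n // e.rg = v}, x e.1.src = ρ n * x v := by
  -- instance search does not see through the application of the matrix `A n`
  let (p : Fin N) : Fintype (Σ q, Fin (A n p q)) := inferInstance
  calc ∑ e : {e : Edge k N A n // e.rg = v}, x e.1.src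
      = ∑ e : Edge k N A n, if e.rg = v then x e.src else 0 := by
        rw [← Finset.sum_filter]
        exact (Finset.sum_subtype _ (fun e => by simp) fun e : Edge k N A n => x e.src).symm
    _ = ∑ p, ∑ q, ∑ _ : Fin (A (n : Fin k) p q), if p = v then x q else 0 := by
        refine (Fintype.sum_equiv (edgeEquiv n) _
          (fun t => if t.1 = v then x t.2.1 else 0) fun _ => rfl).trans ?_
        simp only [Fintype.sum_sigma]
    _ = ∑ q, (A (n : Fin k) v q : ℝ) * x q := by simp
    _ = ρ n * x v := by simpa [Matrix.mulVec, dotProduct] using congrFun (hxeig n) v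

lemma sum_src_of_isSubPath (hxeig : ∀ i, ((A i).map (Nat.cast : ℕ → ℝ)).mulVec x = ρ i • x)
    {m L : ℕ} (γ : FinPath k N A m) (hmL : m ≤ L) :
    ∑ η : FinPath k N A L, (if IsSubPath γ η then x η.src else 0)
      = (∏ j ∈ Finset.Ico m L, ρ j) * x γ.src := by
  induction L, hmL using Nat.le_induction with
  | base =>
    simp_rw [Finset.Ico_self, Finset.prod_empty, one_mul]
    rw [Finset.sum_eq_single γ (fun η _ hη => if_neg fun h => hη h.eq.symm) (by simp),
      if_pos (IsSubPath.refl γ)]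
  | succ L hmL ih =>
    have hlevel : ∀ lam : FinPath k N A L,
        ∑ e : {e : Edge k N A L // e.rg = lam.src},
          (if IsSubPath γ (lam.extend e e.2) then x (lam.extend e e.2).src else 0)
        = ρ L * if IsSubPath γ lam then x lam.src else 0 := fun lam => by
      simp_rw [isSubPath_extend_iff hmL, FinPath.extend_src]
      split_ifs
      · exact sum_edge_src hxeig L lam.src
      · simp
    rw [sum_finPath_succ, Finset.sum_congr rfl fun lam _ => hlevel lam, ← Finset.mul_sum, ih,
      Finset.prod_Ico_succ_top hmL]
    ring

lemma sum_src (hxeig : ∀ i, ((A i).map (Nat.cast : ℕ → ℝ)).mulVec x = ρ i • x)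
    (hxsum : ∑ v, x v = 1) (L : ℕ) :
    ∑ η : FinPath k N A L, x η.src = rhoProd ρ L := by
  calc ∑ η : FinPath k N A L, x η.src
      = ∑ v, ∑ η : FinPath k N A L, if IsSubPath (vertexPath v) η then x η.src else 0 := by
        rw [Finset.sum_comm]
        simp_rw [isSubPath_vertexPath_iff, Finset.sum_ite_eq', Finset.mem_univ, if_true]
    _ = rhoProd ρ L := by
        simp_rw [sum_src_of_isSubPath hxeig _ L.zero_le, ← Finset.mul_sum]
        rw [rhoProd, Finset.range_eq_Ico]
        exact (mul_right_eq_self₀.mpr (Or.inl hxsum))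

lemma sum_Mval_of_isSubPath (hρ : ∀ i, 0 < ρ i)
    (hxeig : ∀ i, ((A i).map (Nat.cast : ℕ → ℝ)).mulVec x = ρ i • x)
    {m L : ℕ} (γ : FinPath k N A m) (hmL : m ≤ L) :
    ∑ η : FinPath k N A L, (if IsSubPath γ η then Mval ρ x ⟨L, η⟩ else 0) = Mval ρ x ⟨m, γ⟩ := by
  simp_rw [Mval_eq, ← mul_ite_zero, ← Finset.mul_sum, sum_src_of_isSubPath hxeig γ hmL, rhoProd,
    ← Finset.prod_range_mul_prod_Ico _ hmL]
  have := (Finset.prod_pos fun j _ => hρ j : 0 < ∏ j ∈ Finset.Ico m L, ρ j).ne'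
  field_simp

lemma sum_Mval (hρ : ∀ i, 0 < ρ i)
    (hxeig : ∀ i, ((A i).map (Nat.cast : ℕ → ℝ)).mulVec x = ρ i • x)
    (hxsum : ∑ v, x v = 1) (L : ℕ) :
    ∑ η : FinPath k N A L, Mval ρ x ⟨L, η⟩ = 1 := by
  simp_rw [Mval_eq, ← Finset.mul_sum, sum_src hxeig hxsum]
  exact inv_mul_cancel₀ (rhoProd_pos hρ L).ne'

end EigenvectorSums

section PathSpace

lemma exists_edge_rg (hrow : ∀ (i : Fin k) (a : Fin N), 0 < ∑ b, A i a b) (n : ℕ) (v : Fin N) :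
    ∃ e : Edge k N A n, e.rg = v := by
  obtain ⟨b, -, hb⟩ := Finset.exists_ne_zero_of_sum_ne_zero (hrow n v).ne'
  exact ⟨⟨v, b, ⟨0, Nat.pos_of_ne_zero hb⟩⟩, rfl⟩

noncomputable def FinPath.extendEdges (next : ∀ n (v : Fin N), {e : Edge k N A n // e.rg = v})
    {m : ℕ} (γ : FinPath k N A m) : ∀ n, Edge k N A n
  | 0 => if h : 0 < m then γ.edge ⟨0, h⟩ else next 0 γ.src
  | n + 1 => if h : n + 1 < m then γ.edge ⟨n + 1, h⟩ else next (n + 1) (γ.extendEdges next n).src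

lemma FinPath.extendEdges_of_lt (next : ∀ n (v : Fin N), {e : Edge k N A n // e.rg = v})
    {m : ℕ} (γ : FinPath k N A m) {n : ℕ} (h : n < m) :
    γ.extendEdges next n = γ.edge ⟨n, h⟩ := by
  cases n <;> simp [FinPath.extendEdges, h]

noncomputable def FinPath.extendToPath (next : ∀ n (v : Fin N), {e : Edge k N A n // e.rg = v})
    {m : ℕ} (γ : FinPath k N A m) : PathSpace k N A :=
  ⟨γ.extendEdges next, fun n => by
    by_cases h : n + 1 < m
    · rw [γ.extendEdges_of_lt next (n.lt_succ_self.trans h), γ.extendEdges_of_lt next h,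
        γ.src_eq, γ.rg_eq]
      rfl
    · simp only [FinPath.extendEdges, dif_neg h, (next _ _).2]⟩

lemma FinPath.extendToPath_mem_cyl (next : ∀ n (v : Fin N), {e : Edge k N A n // e.rg = v})
    {m : ℕ} (γ : FinPath k N A m) : γ.extendToPath next ∈ Cyl γ := by
  refine ⟨?_, fun i => γ.extendEdges_of_lt next i.2⟩
  show (γ.extendEdges next 0).rg = γ.rg
  rcases m.eq_zero_or_pos with rfl | hm
  · simp only [FinPath.extendEdges, lt_irrefl, dif_neg, not_false_eq_true, (next _ _).2]
    rfl
  · rw [γ.extendEdges_of_lt next hm, γ.rg_eq]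
    rfl

lemma cyl_nonempty (hout : ∀ (n : ℕ) (v : Fin N), ∃ e : Edge k N A n, e.rg = v)
    {m : ℕ} (γ : FinPath k N A m) : (Cyl γ).Nonempty := by
  choose next hnext using hout
  exact ⟨γ.extendToPath fun n v => ⟨next n v, hnext n v⟩, γ.extendToPath_mem_cyl _⟩

lemma nonempty_pathSpace [NeZero N]
    (hout : ∀ (n : ℕ) (v : Fin N), ∃ e : Edge k N A n, e.rg = v) : Nonempty (PathSpace k N A) :=
  ⟨(cyl_nonempty hout (vertexPath (0 : Fin N))).some⟩

-- The path space is a continuous image of a closed, hence compact, subset of the product of the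
-- finite discrete edge sets.
instance : CompactSpace (PathSpace k N A) := by
  let _ : ∀ n, TopologicalSpace (Edge k N A n) := fun _ => ⊥
  have _ : ∀ n, DiscreteTopology (Edge k N A n) := fun _ => ⟨rfl⟩
  let K : Set (∀ n, Edge k N A n) := {f | ∀ n, (f n).src = (f (n + 1)).rg}
  have hK : IsCompact K := by
    simp only [K, Set.ofPred_forall]
    refine IsClosed.isCompact (isClosed_iInter fun n => ?_)
    exact (isClosed_discrete {p : Edge k N A n × Edge k N A (n + 1) | p.1.src = p.2.rg}).preimage
      ((continuous_apply n).prodMk (continuous_apply (n + 1)))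
  have _ : CompactSpace K := isCompact_iff_compactSpace.mp hK
  have hcont : @Continuous K (PathSpace k N A) _ _ fun f => ⟨f.1, f.2⟩ := by
    refine continuous_generateFrom_iff.mpr ?_
    rintro _ ⟨ℓ, lam, rfl⟩
    refine isOpen_induced (t := Pi.topologicalSpace) (f := Subtype.val)
      (s := {f : ∀ n, Edge k N A n | (f 0).rg = lam.rg ∧ ∀ i : Fin ℓ, f i = lam.edge i}) ?_
    simp only [Set.ofPred_and, Set.ofPred_forall]
    exact ((isOpen_discrete {e : Edge k N A 0 | e.rg = lam.rg}).preimage (continuous_apply 0)).inter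
      (isOpen_iInter_of_finite fun i => (isOpen_discrete {lam.edge i}).preimage
        (continuous_apply (i : ℕ)))
  have hsurj : Function.Surjective fun f : K => (⟨f.1, f.2⟩ : PathSpace k N A) :=
    fun z => ⟨⟨z.1, z.2⟩, rfl⟩
  exact ⟨hsurj.range_eq ▸ isCompact_range hcont⟩

lemma isSubPath_of_mem_cyl {m ℓ : ℕ} {γ : FinPath k N A m} {η : FinPath k N A ℓ}
    {z : PathSpace k N A} (hγ : z ∈ Cyl γ) (hη : z ∈ Cyl η) (hmℓ : m ≤ ℓ) : IsSubPath γ η :=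
  ⟨hmℓ, hγ.1.symm.trans hη.1, fun i => (hγ.2 i).symm.trans (hη.2 (Fin.castLE hmℓ i))⟩

lemma eq_of_lt_firstDiff {a b : PathSpace k N A} {i : ℕ} (hi : i < firstDiff a b) :
    a.1 i = b.1 i :=
  not_not.mp (Nat.notMem_of_lt_sInf hi)

lemma le_firstDiff {a b : PathSpace k N A} (hab : a ≠ b) {n : ℕ}
    (h : ∀ i < n, a.1 i = b.1 i) : n ≤ firstDiff a b := by
  have hne : {i | a.1 i ≠ b.1 i}.Nonempty := by
    by_contra hempty
    exact hab (Subtype.ext (funext fun i => by_contra fun hi => hempty ⟨i, hi⟩))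
  by_contra! hlt
  exact Nat.sInf_mem hne (h _ hlt)

lemma mem_cyl_prefixPath_of_le_firstDiff {a b : PathSpace k N A} {n : ℕ}
    (hrg : (a.1 0).rg = (b.1 0).rg) (hn : n ≤ firstDiff a b) : b ∈ Cyl (prefixPath a n) :=
  ⟨hrg.symm, fun i => (eq_of_lt_firstDiff (i.2.trans_le hn)).symm⟩

end PathSpace

section Diameters

variable (w : FB k N A → ℝ)

@[simp] lemma diamW_empty : diamW w (∅ : Set (PathSpace k N A)) = 0 := by
  simp [diamW]

lemma ofReal_distW_le_diamW {U : Set (PathSpace k N A)} {a b : PathSpace k N A}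
    (ha : a ∈ U) (hb : b ∈ U) : ENNReal.ofReal (distW w a b) ≤ diamW w U :=
  le_iSup₂_of_le a ha (le_iSup₂_of_le (f := fun b (_ : b ∈ U) => ENNReal.ofReal (distW w a b))
    b hb le_rfl)

lemma exists_subset_cyl_ofReal_le_diamW {U : Set (PathSpace k N A)} (hU : U.Nontrivial)
    (hdiam : diamW w U < 1) :
    ∃ lam : FB k N A, U ⊆ Cyl lam.2 ∧ ENNReal.ofReal (w lam) ≤ diamW w U := by
  obtain ⟨a, ha, b, hb, hab⟩ := hU
  have hroot : ∀ z ∈ U, z ≠ a → (a.1 0).rg = (z.1 0).rg := fun z hz hza => by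
    by_contra hne
    have h1 := (ofReal_distW_le_diamW w ha hz).trans_lt hdiam
    simp [distW, Ne.symm hza, hne] at h1
  have hD : (firstDiff a '' (U \ {a})).Nonempty := ⟨_, b, ⟨hb, hab.symm⟩, rfl⟩
  obtain ⟨y, ⟨hyU, hya⟩, hyd⟩ := Nat.sInf_mem hD
  refine ⟨⟨_, prefixPath a (sInf (firstDiff a '' (U \ {a})))⟩, fun z hz => ?_, ?_⟩
  · by_cases hza : z = a
    · exact hza ▸ mem_cyl_prefixPath a _
    · exact mem_cyl_prefixPath_of_le_firstDiff (hroot z hz hza)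
        (Nat.sInf_le ⟨z, ⟨hz, hza⟩, rfl⟩)
  · have hdist : distW w a y = w ⟨_, prefixPath a (firstDiff a y)⟩ := by
      simp [distW, Ne.symm hya, hroot y hyU hya]
    rw [← hyd, ← hdist]
    exact ofReal_distW_le_diamW w ha hyU

end Diameters

section WeightEstimates

variable {ρ : Fin k → ℝ} {x : Fin N → ℝ} {δ : ℝ}

lemma distW_wt_le_of_mem_cyl (hρ : ∀ i, 1 ≤ ρ i) (hx1 : ∀ v, x v ≤ 1) (hδ : 0 < δ)
    {n : ℕ} (η : FinPath k N A n) {a b : PathSpace k N A} (ha : a ∈ Cyl η) (hb : b ∈ Cyl η) :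
    distW (wt δ ρ x) a b ≤ rhoProd ρ n ^ (-(1 / δ)) := by
  have hpos : ∀ m, 0 < rhoProd ρ m := rhoProd_pos fun i => one_pos.trans_le (hρ i)
  by_cases hab : a = b
  · simpa [distW, hab] using (Real.rpow_pos_of_pos (hpos n) _).le
  have hn : n ≤ firstDiff a b :=
    le_firstDiff hab fun i hi => (ha.2 ⟨i, hi⟩).trans (hb.2 ⟨i, hi⟩).symm
  rw [distW, if_neg hab, if_pos (ha.1.trans hb.1.symm), wt_eq]
  calc rhoProd ρ (firstDiff a b) ^ (-(1 / δ)) * x (prefixPath a (firstDiff a b)).src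
      ≤ rhoProd ρ (firstDiff a b) ^ (-(1 / δ)) :=
        mul_le_of_le_one_right (Real.rpow_pos_of_pos (hpos _) _).le (hx1 _)
    _ ≤ rhoProd ρ n ^ (-(1 / δ)) :=
        Real.rpow_le_rpow_of_nonpos (hpos n) (rhoProd_mono hρ hn) (by simp [hδ.le])

lemma diamW_cyl_le (hρ : ∀ i, 1 ≤ ρ i) (hx1 : ∀ v, x v ≤ 1) (hδ : 0 < δ)
    {n : ℕ} (η : FinPath k N A n) :
    diamW (wt δ ρ x) (Cyl η) ≤ ENNReal.ofReal (rhoProd ρ n ^ (-(1 / δ))) :=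
  iSup₂_le fun _ ha => iSup₂_le fun _ hb =>
    ENNReal.ofReal_le_ofReal (distW_wt_le_of_mem_cyl hρ hx1 hδ η ha hb)

lemma Mval_le_wt_rpow (hρ : ∀ i, 0 < ρ i) (hxpos : ∀ v, 0 < x v) (hx1 : ∀ v, x v ≤ 1)
    (hδ0 : 0 < δ) (hδ1 : δ ≤ 1) (lam : FB k N A) : Mval ρ x lam ≤ wt δ ρ x lam ^ δ := by
  obtain ⟨n, lam⟩ := lam
  have hP := rhoProd_pos hρ n
  rw [Mval_eq, wt_eq, Real.mul_rpow (Real.rpow_pos_of_pos hP _).le (hxpos _).le,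
    ← Real.rpow_mul hP.le, show -(1 / δ) * δ = -1 by field_simp, Real.rpow_neg_one]
  gcongr
  simpa using Real.rpow_le_rpow_of_exponent_ge (hxpos lam.src) (hx1 _) hδ1

lemma exists_forall_Mval_le (hρ : ∀ i, 2 ≤ ρ i) (hx1 : ∀ v, x v ≤ 1) {r : ℝ} (hr : 0 < r) :
    ∃ m, ∀ lam : FinPath k N A m, Mval ρ x ⟨m, lam⟩ ≤ r := by
  obtain ⟨m, hm⟩ := ((tendsto_rhoProd_atTop hρ).eventually_ge_atTop r⁻¹).exists
  refine ⟨m, fun lam => ?_⟩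
  have hP := rhoProd_pos (fun i => two_pos.trans_le (hρ i)) m
  rw [Mval_eq]
  calc (rhoProd ρ m)⁻¹ * x lam.src ≤ (rhoProd ρ m)⁻¹ :=
        mul_le_of_le_one_right (by positivity) (hx1 _)
    _ ≤ r := inv_le_of_inv_le₀ hr hm

end WeightEstimates

section Hausdorff

variable (w : FB k N A → ℝ) (t : ℝ)

noncomputable def preHausW (ε : ℝ≥0∞) (Z : Set (PathSpace k N A)) : ℝ≥0∞ :=
  ⨅ (U : ℕ → Set (PathSpace k N A)) (_ : Z ⊆ ⋃ n, U n) (_ : ∀ n, diamW w (U n) < ε),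
    ∑' n, diamW w (U n) ^ t

lemma hausW_eq_iSup_preHausW (Z : Set (PathSpace k N A)) :
    hausW w t Z = ⨆ (ε : ℝ≥0∞) (_ : 0 < ε), preHausW w t ε Z :=
  rfl

variable {w t}

lemma preHausW_le_sum_of_subset_iUnion (ht : 0 < t) {ε : ℝ≥0∞} (hε : 0 < ε)
    {Z : Set (PathSpace k N A)} {ι : Type*} [Fintype ι] (V : ι → Set (PathSpace k N A))
    (hZ : Z ⊆ ⋃ i, V i) (hV : ∀ i, diamW w (V i) < ε) :
    preHausW w t ε Z ≤ ∑ i, diamW w (V i) ^ t := by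
  obtain ⟨g, hg⟩ := exists_injective_nat ι
  refine iInf₂_le_of_le (Function.extend g V fun _ => ∅) (fun z hz => ?_) (iInf_le_of_le
    (fun n => ?_) (le_of_eq ?_))
  · obtain ⟨i, hi⟩ := Set.mem_iUnion.mp (hZ hz)
    exact Set.mem_iUnion.mpr ⟨g i, by rwa [hg.extend_apply]⟩
  · by_cases hn : ∃ i, g i = n
    · obtain ⟨i, rfl⟩ := hn
      rw [hg.extend_apply]
      exact hV i
    · rwa [Function.extend_apply' _ _ _ hn, diamW_empty]
  · have hzero : ((fun U => diamW w U ^ t) ∘ fun _ : ℕ => (∅ : Set (PathSpace k N A))) = 0 := by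
      funext; simp [ht]
    simp_rw [Function.apply_extend (fun U => diamW w U ^ t), hzero, tsum_extend_zero hg,
      tsum_fintype, Function.comp_apply]

end Hausdorff

section UpperBound

variable {ρ : Fin k → ℝ} {x : Fin N → ℝ} {δ t : ℝ}

lemma card_mul_le_rhoProd (hxeig : ∀ i, ((A i).map (Nat.cast : ℕ → ℝ)).mulVec x = ρ i • x)
    (hxsum : ∑ v, x v = 1) {v₀ : Fin N} (hv₀ : ∀ v, x v₀ ≤ x v) (n : ℕ) :
    (Fintype.card (FinPath k N A n) : ℝ) * x v₀ ≤ rhoProd ρ n := by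
  rw [← sum_src hxeig hxsum n, ← nsmul_eq_mul, ← Finset.card_univ, ← Finset.sum_const]
  exact Finset.sum_le_sum fun η _ => hv₀ _

lemma sum_diamW_cyl_rpow_le (hρ : ∀ i, 2 ≤ ρ i)
    (hxeig : ∀ i, ((A i).map (Nat.cast : ℕ → ℝ)).mulVec x = ρ i • x)
    (hxsum : ∑ v, x v = 1) (hx1 : ∀ v, x v ≤ 1) (hδ : 0 < δ) (ht : 0 ≤ t)
    {v₀ : Fin N} (hv₀ : 0 < x v₀) (hmin : ∀ v, x v₀ ≤ x v) (n : ℕ) :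
    ∑ η : FinPath k N A n, diamW (wt δ ρ x) (Cyl η) ^ t
      ≤ ENNReal.ofReal (rhoProd ρ n ^ (1 - t / δ) / x v₀) := by
  have hρ1 : ∀ i, 1 ≤ ρ i := fun i => one_le_two.trans (hρ i)
  have hP := rhoProd_pos (fun i => two_pos.trans_le (hρ i)) n
  calc ∑ η : FinPath k N A n, diamW (wt δ ρ x) (Cyl η) ^ t
      ≤ ∑ _η : FinPath k N A n, ENNReal.ofReal (rhoProd ρ n ^ (-(t / δ))) :=
        Finset.sum_le_sum fun η _ => by
          rw [show -(t / δ) = -(1 / δ) * t by ring, Real.rpow_mul hP.le,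
            ← ENNReal.ofReal_rpow_of_nonneg (by positivity) ht]
          exact ENNReal.rpow_le_rpow (diamW_cyl_le hρ1 hx1 hδ η) ht
    _ = ENNReal.ofReal (Fintype.card (FinPath k N A n) * rhoProd ρ n ^ (-(t / δ))) := by
        rw [Finset.sum_const, Finset.card_univ, nsmul_eq_mul,
          ENNReal.ofReal_mul (Nat.cast_nonneg _), ENNReal.ofReal_natCast]
    _ ≤ ENNReal.ofReal (rhoProd ρ n ^ (1 - t / δ) / x v₀) := by
        refine ENNReal.ofReal_le_ofReal ?_
        rw [sub_eq_add_neg, Real.rpow_add hP, Real.rpow_one, le_div_iff₀ hv₀, mul_right_comm]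
        exact mul_le_mul_of_nonneg_right (card_mul_le_rhoProd hxeig hxsum hmin n) (by positivity)

lemma hausW_univ_eq_zero [NeZero N] (hρ : ∀ i, 2 ≤ ρ i)
    (hxeig : ∀ i, ((A i).map (Nat.cast : ℕ → ℝ)).mulVec x = ρ i • x)
    (hxsum : ∑ v, x v = 1) (hxpos : ∀ v, 0 < x v) (hx1 : ∀ v, x v ≤ 1)
    (hδ : 0 < δ) (hδt : δ < t) :
    hausW (wt δ ρ x) t (Set.univ : Set (PathSpace k N A)) = 0 := by
  obtain ⟨v₀, -, hmin⟩ := Finset.exists_min_image Finset.univ x Finset.univ_nonempty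
  replace hmin : ∀ v, x v₀ ≤ x v := fun v => hmin v (Finset.mem_univ v)
  have hP := tendsto_rhoProd_atTop hρ
  have hdiam : Tendsto (fun n => ENNReal.ofReal (rhoProd ρ n ^ (-(1 / δ)))) atTop (𝓝 0) := by
    simpa using ENNReal.tendsto_ofReal ((tendsto_rpow_neg_atTop (by positivity)).comp hP)
  have hsum : Tendsto (fun n => ENNReal.ofReal (rhoProd ρ n ^ (1 - t / δ) / x v₀))
      atTop (𝓝 0) := by
    have h : 0 < t / δ - 1 := by rwa [sub_pos, one_lt_div hδ]
    simpa [neg_sub] using ENNReal.tendsto_ofReal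
      (((tendsto_rpow_neg_atTop h).comp hP).div_const (x v₀))
  rw [hausW_eq_iSup_preHausW]
  refine le_antisymm (iSup₂_le fun ε hε => ge_of_tendsto hsum ?_) zero_le
  filter_upwards [hdiam.eventually_lt_const hε] with n hn
  refine (preHausW_le_sum_of_subset_iUnion (hδ.trans hδt) hε (fun η : FinPath k N A n => Cyl η)
    (fun z _ => Set.mem_iUnion.mpr ⟨prefixPath z n, mem_cyl_prefixPath z n⟩)
    fun η => (diamW_cyl_le (fun i => one_le_two.trans (hρ i)) hx1 hδ η).trans_lt hn).trans ?_
  exact sum_diamW_cyl_rpow_le hρ hxeig hxsum hx1 hδ (hδ.trans hδt).le (hxpos v₀) hmin n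

end UpperBound

section LowerBound

variable {ρ : Fin k → ℝ} {x : Fin N → ℝ} {δ t : ℝ}

lemma one_le_sum_Mval_of_subset_iUnion (hρ : ∀ i, 0 < ρ i)
    (hxeig : ∀ i, ((A i).map (Nat.cast : ℕ → ℝ)).mulVec x = ρ i • x)
    (hxsum : ∑ v, x v = 1) (hx : ∀ v, 0 ≤ x v)
    (hout : ∀ (n : ℕ) (v : Fin N), ∃ e : Edge k N A n, e.rg = v)
    {ι : Type*} (s : Finset ι) (C : ι → FB k N A) (hs : Set.univ ⊆ ⋃ i ∈ s, Cyl (C i).2) :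
    1 ≤ ∑ i ∈ s, Mval ρ x (C i) := by
  set L := s.sup fun i => (C i).1
  have hle : ∀ i ∈ s, (C i).1 ≤ L := fun i hi => Finset.le_sup (f := fun i => (C i).1) hi
  have hcover : ∀ η : FinPath k N A L, ∃ i ∈ s, IsSubPath (C i).2 η := fun η => by
    obtain ⟨z, hz⟩ := cyl_nonempty hout η
    obtain ⟨i, hi, hzi⟩ := Set.mem_iUnion₂.mp (hs (Set.mem_univ z))
    exact ⟨i, hi, isSubPath_of_mem_cyl hzi hz (hle i hi)⟩
  calc 1 = ∑ η : FinPath k N A L, Mval ρ x ⟨L, η⟩ := (sum_Mval hρ hxeig hxsum L).symm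
    _ ≤ ∑ η : FinPath k N A L, ∑ i ∈ s, if IsSubPath (C i).2 η then Mval ρ x ⟨L, η⟩ else 0 :=
        Finset.sum_le_sum fun η _ => by
          obtain ⟨i, hi, hsub⟩ := hcover η
          refine (if_pos hsub).symm.trans_le (Finset.single_le_sum (f := fun i =>
            if IsSubPath (C i).2 η then Mval ρ x ⟨L, η⟩ else 0) (fun j _ => ?_) hi)
          split_ifs
          exacts [Mval_nonneg hρ hx _, le_rfl]
    _ = ∑ i ∈ s, Mval ρ x (C i) := by
        rw [Finset.sum_comm]
        exact Finset.sum_congr rfl fun i hi => sum_Mval_of_isSubPath hρ hxeig _ (hle i hi)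

lemma one_le_tsum_Mval_of_subset_iUnion (hρ : ∀ i, 0 < ρ i)
    (hxeig : ∀ i, ((A i).map (Nat.cast : ℕ → ℝ)).mulVec x = ρ i • x)
    (hxsum : ∑ v, x v = 1) (hx : ∀ v, 0 ≤ x v)
    (hout : ∀ (n : ℕ) (v : Fin N), ∃ e : Edge k N A n, e.rg = v)
    (C : ℕ → FB k N A) (hC : Set.univ ⊆ ⋃ i, Cyl (C i).2) :
    1 ≤ ∑' i, ENNReal.ofReal (Mval ρ x (C i)) := by
  obtain ⟨s, hs⟩ := isCompact_univ.elim_finite_subcover _ (fun i => isOpen_cyl (C i).2) hC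
  calc (1 : ℝ≥0∞) ≤ ENNReal.ofReal (∑ i ∈ s, Mval ρ x (C i)) := by
        simpa using ENNReal.ofReal_le_ofReal
          (one_le_sum_Mval_of_subset_iUnion hρ hxeig hxsum hx hout s C hs)
    _ = ∑ i ∈ s, ENNReal.ofReal (Mval ρ x (C i)) :=
        ENNReal.ofReal_sum_of_nonneg fun i _ => Mval_nonneg hρ hx _
    _ ≤ ∑' i, ENNReal.ofReal (Mval ρ x (C i)) := ENNReal.sum_le_tsum s

lemma exists_subset_cyl_ofReal_Mval_le [Nonempty (PathSpace k N A)] (hρ : ∀ i, 2 ≤ ρ i)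
    (hxpos : ∀ v, 0 < x v) (hx1 : ∀ v, x v ≤ 1) (hδ0 : 0 < δ) (hδ1 : δ ≤ 1)
    (ht : 0 ≤ t) (htδ : t ≤ δ) {ε : ℝ≥0∞} (hε : ε ≤ 1) {U : Set (PathSpace k N A)}
    (hU : diamW (wt δ ρ x) U < ε) {r : NNReal} (hr : 0 < r) :
    ∃ lam : FB k N A, U ⊆ Cyl lam.2 ∧
      ENNReal.ofReal (Mval ρ x lam) ≤ diamW (wt δ ρ x) U ^ t * ε ^ (δ - t) + r := by
  rcases U.subsingleton_or_nontrivial with hsub | hnt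
  · obtain ⟨m, hm⟩ := exists_forall_Mval_le hρ hx1 (r := r) hr
    obtain ⟨a, ha⟩ : ∃ a, U ⊆ {a} := by
      rcases hsub.eq_empty_or_singleton with rfl | ⟨a, rfl⟩
      exacts [⟨Classical.arbitrary _, Set.empty_subset _⟩, ⟨a, subset_rfl⟩]
    refine ⟨⟨m, prefixPath a m⟩, fun z hz => ha hz ▸ mem_cyl_prefixPath a m, le_add_left ?_⟩
    simpa using ENNReal.ofReal_le_ofReal (hm (prefixPath a m))
  · have hρ0 : ∀ i, 0 < ρ i := fun i => two_pos.trans_le (hρ i)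
    obtain ⟨lam, hsub, hle⟩ := exists_subset_cyl_ofReal_le_diamW _ hnt (hU.trans_le hε)
    refine ⟨lam, hsub, le_add_right ?_⟩
    have hwt : 0 ≤ wt δ ρ x lam := by
      rw [wt_eq]
      exact mul_nonneg (Real.rpow_pos_of_pos (rhoProd_pos hρ0 _) _).le (hxpos _).le
    calc ENNReal.ofReal (Mval ρ x lam) ≤ ENNReal.ofReal (wt δ ρ x lam ^ δ) :=
          ENNReal.ofReal_le_ofReal (Mval_le_wt_rpow hρ0 hxpos hx1 hδ0 hδ1 lam)
      _ = ENNReal.ofReal (wt δ ρ x lam) ^ δ := (ENNReal.ofReal_rpow_of_nonneg hwt hδ0.le).symm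
      _ ≤ diamW (wt δ ρ x) U ^ δ := ENNReal.rpow_le_rpow hle hδ0.le
      _ ≤ diamW (wt δ ρ x) U ^ t * ε ^ (δ - t) := ENNReal.rpow_le_rpow_mul_rpow_sub hU.le ht htδ

lemma inv_rpow_le_preHausW [Nonempty (PathSpace k N A)] (hρ : ∀ i, 2 ≤ ρ i)
    (hxeig : ∀ i, ((A i).map (Nat.cast : ℕ → ℝ)).mulVec x = ρ i • x)
    (hxsum : ∑ v, x v = 1) (hxpos : ∀ v, 0 < x v) (hx1 : ∀ v, x v ≤ 1)
    (hout : ∀ (n : ℕ) (v : Fin N), ∃ e : Edge k N A n, e.rg = v)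
    (hδ0 : 0 < δ) (hδ1 : δ ≤ 1) (ht : 0 ≤ t) (htδ : t ≤ δ) {ε : ℝ≥0∞} (hε0 : 0 < ε)
    (hε1 : ε ≤ 1) :
    (ε ^ (δ - t))⁻¹ ≤ preHausW (wt δ ρ x) t ε (Set.univ : Set (PathSpace k N A)) := by
  have hεtop : ε ≠ ⊤ := (hε1.trans_lt ENNReal.one_lt_top).ne
  refine le_iInf₂ fun U hU => le_iInf fun hdiam => ?_
  rw [ENNReal.inv_le_iff_le_mul (fun _ => (ENNReal.rpow_pos hε0 hεtop).ne')
    (fun h => absurd h (ENNReal.rpow_ne_top_of_nonneg (sub_nonneg.mpr htδ) hεtop)), mul_comm]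
  refine ENNReal.le_of_forall_pos_le_add fun r hr _ => ?_
  -- the errors `r' n` pay for the sets `U n` that are singletons
  obtain ⟨r', hr'pos, hr'sum⟩ :=
    ENNReal.exists_pos_sum_of_countable (ENNReal.coe_ne_zero.mpr hr.ne') ℕ
  choose C hCU hCM using fun n =>
    exists_subset_cyl_ofReal_Mval_le hρ hxpos hx1 hδ0 hδ1 ht htδ hε1 (hdiam n) (hr'pos n)
  have hcover : Set.univ ⊆ ⋃ n, Cyl (C n).2 := fun z hz => by
    obtain ⟨n, hn⟩ := Set.mem_iUnion.mp (hU hz)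
    exact Set.mem_iUnion.mpr ⟨n, hCU n hn⟩
  calc 1 ≤ ∑' n, ENNReal.ofReal (Mval ρ x (C n)) :=
        one_le_tsum_Mval_of_subset_iUnion (fun i => two_pos.trans_le (hρ i)) hxeig hxsum
          (fun v => (hxpos v).le) hout C hcover
    _ ≤ ∑' n, (diamW (wt δ ρ x) (U n) ^ t * ε ^ (δ - t) + r' n) := ENNReal.tsum_le_tsum hCM
    _ = (∑' n, diamW (wt δ ρ x) (U n) ^ t) * ε ^ (δ - t) + ∑' n, (r' n : ℝ≥0∞) := by
        rw [ENNReal.tsum_add, ENNReal.tsum_mul_right]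
    _ ≤ (∑' n, diamW (wt δ ρ x) (U n) ^ t) * ε ^ (δ - t) + r := by gcongr

lemma hausW_univ_eq_top [Nonempty (PathSpace k N A)] (hρ : ∀ i, 2 ≤ ρ i)
    (hxeig : ∀ i, ((A i).map (Nat.cast : ℕ → ℝ)).mulVec x = ρ i • x)
    (hxsum : ∑ v, x v = 1) (hxpos : ∀ v, 0 < x v) (hx1 : ∀ v, x v ≤ 1)
    (hout : ∀ (n : ℕ) (v : Fin N), ∃ e : Edge k N A n, e.rg = v)
    (hδ0 : 0 < δ) (hδ1 : δ ≤ 1) (ht : 0 ≤ t) (htδ : t < δ) :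
    hausW (wt δ ρ x) t (Set.univ : Set (PathSpace k N A)) = ⊤ := by
  have hlim : Tendsto (fun ε : ℝ≥0∞ => (ε ^ (δ - t))⁻¹) (𝓝[>] 0) (𝓝 ⊤) := by
    have h := (ENNReal.continuous_rpow_const (y := δ - t)).tendsto 0
    rw [ENNReal.zero_rpow_of_pos (sub_pos.mpr htδ)] at h
    simpa using (tendsto_inv_iff.mpr h).mono_left nhdsWithin_le_nhds
  refine top_le_iff.mp (le_of_tendsto hlim ?_)
  filter_upwards [Ioc_mem_nhdsGT zero_lt_one] with ε ⟨hε0, hε1⟩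
  exact (inv_rpow_le_preHausW hρ hxeig hxsum hxpos hx1 hout hδ0 hδ1 ht htδ.le hε0 hε1).trans
    (le_iSup₂_of_le (f := fun ε (_ : 0 < ε) => preHausW (wt δ ρ x) t ε Set.univ) ε hε0 le_rfl)

end LowerBound

end Development

theorem statement11_general (k N : ℕ) [NeZero k] [NeZero N]
    (A : Fin k → Matrix (Fin N) (Fin N) ℕ)
    (hrow : ∀ (i : Fin k) (a : Fin N), 2 ≤ ∑ b, A i a b)
    (ρ : Fin k → ℝ)
    (x : Fin N → ℝ) (hxpos : ∀ v, 0 < x v) (hxsum : ∑ v, x v = 1)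
    (hxeig : ∀ i, ((A i).map (Nat.cast : ℕ → ℝ)).mulVec x = ρ i • x)
    (δ : ℝ) (hδ : δ ∈ Set.Ioo (0 : ℝ) 1) :
    ∀ t : ℝ, 0 ≤ t →
      (t < δ → hausW (wt δ ρ x) t (Set.univ : Set (PathSpace k N A)) = ⊤) ∧
      (δ < t → hausW (wt δ ρ x) t (Set.univ : Set (PathSpace k N A)) = 0) := by
  obtain ⟨hδ0, hδ1⟩ := hδ
  have hρ : ∀ i, 2 ≤ ρ i := fun i =>
    Matrix.le_of_le_row_sum_of_mulVec_eq_smul (fun a b => Nat.cast_nonneg _)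
      (fun a => by exact_mod_cast hrow i a) hxpos (hxeig i)
  have hx1 : ∀ v, x v ≤ 1 := fun v =>
    hxsum ▸ Finset.single_le_sum (fun w _ => (hxpos w).le) (Finset.mem_univ v)
  have hout := exists_edge_rg (A := A) fun i a => two_pos.trans_le (hrow i a)
  have := nonempty_pathSpace hout
  exact fun t ht =>
    ⟨fun htδ => hausW_univ_eq_top hρ hxeig hxsum hxpos hx1 hout hδ0 hδ1.le ht htδ,
      fun hδt => hausW_univ_eq_zero hρ hxeig hxsum hxpos hx1 hδ0 hδt⟩

/-- The Hausdorff dimension of `(X_B, d_δ)` is `δ`: for every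
`t ≥ 0`, the `t`-dimensional Hausdorff measure of `X_B` is `∞` when `t < δ` and
`0` when `t > δ`. -/
theorem statement11 (k N : ℕ) [NeZero k] [NeZero N]
    (A : Fin k → Matrix (Fin N) (Fin N) ℕ)
    (hcomm : ∀ i j, A i * A j = A j * A i)
    (hirr : IrreducibleFamily A)
    (hrow : ∀ (i : Fin k) (a : Fin N), 2 ≤ ∑ b, A i a b)
    (ρ : Fin k → ℝ) (hρ : ∀ i, ρ i = specRad (A i))
    (x : Fin N → ℝ) (hxpos : ∀ v, 0 < x v) (hxsum : ∑ v, x v = 1)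
    (hxeig : ∀ i, ((A i).map (Nat.cast : ℕ → ℝ)).mulVec x = ρ i • x)
    (δ : ℝ) (hδ : δ ∈ Set.Ioo (0 : ℝ) 1) :
    ∀ t : ℝ, 0 ≤ t →
      (t < δ → hausW (wt δ ρ x) t (Set.univ : Set (PathSpace k N A)) = ⊤) ∧
      (δ < t → hausW (wt δ ρ x) t (Set.univ : Set (PathSpace k N A)) = 0) :=
  statement11_general k N A hrow ρ x hxpos hxsum hxeig δ hδ

end KBratteli
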